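/- arXiv:1010.0311 — 4 statements merged into one kernel-verified Lean document; each statement's English description precedes it below -/
import Mathlib

section
/- Consider the ℓ1-regularized convex problem min_θ {ℓ(θ) + λ||θ||_1} with ℓ convex and differentiable and λ > 0. Suppose there exists an optimal primal solution θ̂ with associated subgradient vector ẑ (satisfying ∇ℓ(θ̂) + λẑ = 0, ẑ_j = sign(θ̂_j) when θ̂_j ≠ 0, |ẑ_j| ≤ 1 otherwise) such that |ẑ_j| < 1 for all j in a set S^c. Then any optimal primal solution θ̃ satisfies θ̃_j = 0 for all j ∈ S^c. -/
/-!
Convexity of `ℓ` gives `ℓ θ̃ ≥ ℓ θ̂ + ⟪∇ℓ θ̂, θ̃ - θ̂⟫ = ℓ θ̂ - λ (⟪ẑ, θ̃⟫ - ‖θ̂‖₁)`, since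
`⟪ẑ, θ̂⟫ = ‖θ̂‖₁` by the sign condition. Comparing with `F θ̃ ≤ F θ̂` yields `‖θ̃‖₁ ≤ ⟪ẑ, θ̃⟫`.
As `ẑ_j θ̃_j ≤ |θ̃_j|` for every `j`, this forces `ẑ_j θ̃_j = |θ̃_j|` coordinatewise, which is
impossible for `θ̃_j ≠ 0` when `|ẑ_j| < 1`.
-/

open Set RealInnerProductSpace

theorem ConvexOn.add_le_of_hasFDerivAt {E : Type*} [NormedAddCommGroup E] [NormedSpace ℝ E]
    {s : Set E} {f : E → ℝ} {f' : E →L[ℝ] ℝ} {x y : E} (hf : ConvexOn ℝ s f)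
    (hx : x ∈ s) (hy : y ∈ s) (hf' : HasFDerivAt f f' x) :
    f x + f' (y - x) ≤ f y := by
  set c : ℝ →ᵃ[ℝ] E := AffineMap.lineMap x y
  have hc : ⇑c = fun t : ℝ => t • (y - x) + x := funext (AffineMap.lineMap_apply_module' x y)
  have hcd : HasDerivAt c (y - x) 0 := by
    simpa [hc] using ((hasDerivAt_id (0 : ℝ)).smul_const (y - x)).add_const x
  have hderiv : HasDerivAt (f ∘ c) (f' (y - x)) 0 :=
    (by simpa [hc] using hf' : HasFDerivAt f f' (c 0)).comp_hasDerivAt 0 hcd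
  have hslope := (hf.comp_affineMap c).le_slope_of_hasDerivAt
    (by simpa [hc]) (by simpa [hc]) one_pos hderiv
  simp [slope_def_field, hc] at hslope
  linarith [map_sub f' y x]

theorem ConvexOn.add_inner_le_of_hasGradientAt {E : Type*} [NormedAddCommGroup E]
    [InnerProductSpace ℝ E] [CompleteSpace E] {s : Set E} {f : E → ℝ} {g x y : E}
    (hf : ConvexOn ℝ s f) (hx : x ∈ s) (hy : y ∈ s) (hg : HasGradientAt f g x) :
    f x + ⟪g, y - x⟫ ≤ f y :=
  hf.add_le_of_hasFDerivAt hx hy hg.hasFDerivAt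

theorem Real.sign_mul_self (r : ℝ) : Real.sign r * r = |r| := by
  rcases lt_trichotomy r 0 with h | rfl | h
  · rw [Real.sign_of_neg h, abs_of_neg h, neg_one_mul]
  · simp
  · rw [Real.sign_of_pos h, abs_of_pos h, one_mul]

section L1Subgradient

variable {ι : Type*} [Fintype ι] {z θ : ι → ℝ}

theorem sum_mul_eq_sum_abs_of_eq_sign (hsign : ∀ j, θ j ≠ 0 → z j = Real.sign (θ j)) :
    ∑ j, z j * θ j = ∑ j, |θ j| := by
  refine Finset.sum_congr rfl fun j _ => ?_
  rcases eq_or_ne (θ j) 0 with h | h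
  · simp [h]
  · rw [hsign j h, Real.sign_mul_self]

theorem mul_le_abs_of_abs_le_one {a b : ℝ} (ha : |a| ≤ 1) : a * b ≤ |b| :=
  calc a * b ≤ |a| * |b| := (le_abs_self _).trans_eq (abs_mul a b)
    _ ≤ |b| := mul_le_of_le_one_left (abs_nonneg b) ha

theorem eq_zero_of_sum_abs_le_sum_mul (hz : ∀ j, |z j| ≤ 1)
    (hθ : ∑ j, |θ j| ≤ ∑ j, z j * θ j) {j : ι} (hj : |z j| < 1) : θ j = 0 := by
  have hterm : ∀ i ∈ Finset.univ, z i * θ i ≤ |θ i| := fun i _ => mul_le_abs_of_abs_le_one (hz i)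
  have heq : z j * θ j = |θ j| :=
    (Finset.sum_eq_sum_iff_of_le hterm).1 (le_antisymm (Finset.sum_le_sum hterm) hθ) j
      (Finset.mem_univ j)
  by_contra hne
  have hlt : z j * θ j < |θ j| :=
    calc z j * θ j ≤ |z j| * |θ j| := (le_abs_self _).trans_eq (abs_mul _ _)
      _ < |θ j| := mul_lt_of_lt_one_left (abs_pos.2 hne) hj
  exact hlt.ne heq

end L1Subgradient

theorem EuclideanSpace.inner_eq_sum_mul {n : ℕ} (x y : EuclideanSpace ℝ (Fin n)) :
    ⟪x, y⟫ = ∑ j, x j * y j := by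
  simp [PiLp.inner_apply, mul_comm]

theorem l1_reg_shared_sparsity_general
    (m : ℕ) (S : Set (Fin m))
    (ℓ : EuclideanSpace ℝ (Fin m) → ℝ)
    (g : EuclideanSpace ℝ (Fin m) → EuclideanSpace ℝ (Fin m))
    (hconv : ConvexOn ℝ Set.univ ℓ)
    (hgrad : ∀ θ, HasGradientAt ℓ (g θ) θ)
    (lam : ℝ) (hlam : 0 < lam)
    (F : EuclideanSpace ℝ (Fin m) → ℝ)
    (hF : ∀ θ, F θ = ℓ θ + lam * ∑ j, |θ j|)
    (θhat zhat : EuclideanSpace ℝ (Fin m))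
    (hstat : g θhat + lam • zhat = 0)
    (hsign : ∀ j, θhat j ≠ 0 → zhat j = Real.sign (θhat j))
    (hbound : ∀ j, |zhat j| ≤ 1)
    (hstrict : ∀ j ∉ S, |zhat j| < 1)
    (θtilde : EuclideanSpace ℝ (Fin m))
    (hopt' : ∀ θ, F θtilde ≤ F θ) :
    ∀ j ∉ S, θtilde j = 0 := by
  intro j hj
  have htangent := hconv.add_inner_le_of_hasGradientAt (mem_univ _) (mem_univ θtilde) (hgrad θhat)
  have hinner : ⟪g θhat, θtilde - θhat⟫ = -lam * (∑ i, zhat i * θtilde i - ∑ i, |θhat i|) := by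
    rw [eq_neg_of_add_eq_zero_left hstat, inner_neg_left, real_inner_smul_left, inner_sub_right,
      EuclideanSpace.inner_eq_sum_mul, EuclideanSpace.inner_eq_sum_mul,
      sum_mul_eq_sum_abs_of_eq_sign hsign]
    ring
  have hle := hopt' θhat
  rw [hF, hF] at hle
  have hkey : ∑ i, |θtilde i| ≤ ∑ i, zhat i * θtilde i :=
    le_of_mul_le_mul_left (by linarith) hlam
  exact eq_zero_of_sum_abs_le_sum_mul hbound hkey (hstrict j hj)

/-- Shared sparsity of optimal solutions of the ℓ1-regularized convex problem
`min_θ { ℓ(θ) + λ‖θ‖₁ }`. If there is an optimal primal solution `θ̂` with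
subgradient vector `ẑ` (satisfying `∇ℓ(θ̂) + λẑ = 0`, `ẑ_j = sign(θ̂_j)` when
`θ̂_j ≠ 0`, `|ẑ_j| ≤ 1` otherwise) such that `|ẑ_j| < 1` for all `j ∈ Sᶜ`,
then any optimal primal solution `θ̃` satisfies `θ̃_j = 0` for all `j ∈ Sᶜ`. -/
theorem l1_reg_shared_sparsity
    (m : ℕ) (S : Set (Fin m))
    (ℓ : EuclideanSpace ℝ (Fin m) → ℝ)
    (g : EuclideanSpace ℝ (Fin m) → EuclideanSpace ℝ (Fin m))
    (hconv : ConvexOn ℝ Set.univ ℓ)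
    (hgrad : ∀ θ, HasGradientAt ℓ (g θ) θ)
    (lam : ℝ) (hlam : 0 < lam)
    (F : EuclideanSpace ℝ (Fin m) → ℝ)
    (hF : ∀ θ, F θ = ℓ θ + lam * ∑ j, |θ j|)
    (θhat zhat : EuclideanSpace ℝ (Fin m))
    (hstat : g θhat + lam • zhat = 0)
    (hsign : ∀ j, θhat j ≠ 0 → zhat j = Real.sign (θhat j))
    (hbound : ∀ j, |zhat j| ≤ 1)
    (hstrict : ∀ j ∉ S, |zhat j| < 1)
    (hopt : ∀ θ, F θhat ≤ F θ)
    (θtilde : EuclideanSpace ℝ (Fin m))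
    (hopt' : ∀ θ, F θtilde ≤ F θ) :
    ∀ j ∉ S, θtilde j = 0 :=
  l1_reg_shared_sparsity_general m S ℓ g hconv hgrad lam hlam F hF θhat zhat hstat hsign hbound
    hstrict θtilde hopt'
end

section
/- Consider the ℓ1-regularized convex problem min_θ {ℓ(θ) + λ||θ||_1} with ℓ convex and twice differentiable. Suppose there exists an optimal solution θ̂ with subgradient ẑ satisfying |ẑ_j| < 1 for all j ∈ S^c (so all optimal solutions vanish on S^c), and suppose further the Hessian submatrix [∇²ℓ(θ̂)]_{SS} is strictly positive definite. Then θ̂ is the unique optimal solution. -/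
/-!
The gradient inequality at `θhat` together with stationarity gives, for every `θ`,
`F θ - F θhat ≥ lam * ∑ j, (|θ j| - zhat j * θ j) ≥ 0`, so any other minimiser `θtilde` satisfies
`zhat j * θtilde j = |θtilde j|` for all `j`, and strict dual feasibility makes it vanish off `S`,
as does `θhat`. Both summands of `F` are convex and `F` is constant on the segment
`[θhat, θtilde]`, so `ℓ` is affine there. Then the second derivative of `ℓ` at `θhat` in the
direction `θtilde - θhat`, read off from the right at the endpoint, vanishes; as this direction
is supported on `S`, positive definiteness forces `θtilde = θhat`.
-/

open scoped RealInnerProductSpace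
open Set Filter Topology AffineMap

lemma Real.sign_mul_self_eq_abs (x : ℝ) : Real.sign x * x = |x| := by
  rcases lt_trichotomy x 0 with hx | rfl | hx
  · rw [Real.sign_of_neg hx, abs_of_neg hx]; ring
  · simp
  · rw [Real.sign_of_pos hx, abs_of_pos hx]; ring

lemma eq_zero_of_mul_eq_abs_of_abs_lt_one {z x : ℝ} (hz : |z| < 1) (h : z * x = |x|) :
    x = 0 := by
  by_contra hx
  have hlt : |z * x| < |x| := by
    rw [abs_mul]; exact mul_lt_of_lt_one_left (abs_pos.2 hx) hz
  exact (le_abs_self (z * x)).not_gt (h ▸ hlt)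

lemma HasDerivAt.eq_of_eventuallyEq_nhdsGE {F : Type*} [NormedAddCommGroup F] [NormedSpace ℝ F]
    {f g : ℝ → F} {f' g' : F} {a : ℝ} (hf : HasDerivAt f f' a) (hg : HasDerivAt g g' a)
    (h : f =ᶠ[𝓝[≥] a] g) : f' = g' :=
  (uniqueDiffWithinAt_Ici a).eq_deriv _ hf.hasDerivWithinAt
    (hg.hasDerivWithinAt.congr_of_eventuallyEq h (h.eq_of_nhdsWithin self_mem_Ici))

lemma eq_zero_of_hasDerivAt_of_eqOn_lineMap {φ ψ : ℝ → ℝ} {p q e : ℝ}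
    (hφ : ∀ t ∈ Ico (0 : ℝ) 1, HasDerivAt φ (ψ t) t) (hψ : HasDerivAt ψ e 0)
    (haff : EqOn φ (lineMap p q) (Icc 0 1)) : e = 0 := by
  have hψ_const : EqOn ψ (fun _ => q - p) (Ico 0 1) := fun t ht =>
    (hφ t ht).eq_of_eventuallyEq_nhdsGE hasDerivAt_lineMap <|
      eventually_of_mem (Ico_mem_nhdsGE ht.2) fun s hs => haff ⟨ht.1.trans hs.1, hs.2.le⟩
  exact hψ.eq_of_eventuallyEq_nhdsGE (hasDerivAt_const 0 (q - p))
    (eventually_of_mem (Ico_mem_nhdsGE one_pos) hψ_const)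

lemma ConvexOn.apply_lineMap_eq_of_isMinOn_add {E : Type*} [AddCommGroup E] [Module ℝ E]
    {f h : E → ℝ} (hf : ConvexOn ℝ univ f) (hh : ConvexOn ℝ univ h) {x y : E}
    (hx : IsMinOn (f + h) univ x) (hy : (f + h) y ≤ (f + h) x) {t : ℝ} (ht : t ∈ Icc 0 1) :
    f (lineMap x y t) = lineMap (f x) (f y) t := by
  have h1t : 0 ≤ 1 - t := sub_nonneg.2 ht.2
  have hf_le := hf.2 (mem_univ x) (mem_univ y) h1t ht.1 (sub_add_cancel 1 t)
  have hh_le := hh.2 (mem_univ x) (mem_univ y) h1t ht.1 (sub_add_cancel 1 t)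
  have hmin : (f + h) x ≤ (f + h) (lineMap x y t) := hx (mem_univ _)
  rw [lineMap_apply_module] at hmin ⊢
  simp only [Pi.add_apply, smul_eq_mul, lineMap_apply_ring'] at *
  nlinarith [mul_le_mul_of_nonneg_left hy ht.1]

section Gradient

variable {E : Type*} [NormedAddCommGroup E] [InnerProductSpace ℝ E] [CompleteSpace E]

lemma HasGradientAt.hasDerivAt_comp_lineMap {f : E → ℝ} {g x y : E} {t : ℝ}
    (hf : HasGradientAt f g (lineMap x y t)) :
    HasDerivAt (fun s => f (lineMap x y s)) ⟪g, y - x⟫ t := by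
  have h := hf.hasFDerivAt.comp_hasDerivAt t hasDerivAt_lineMap
  rw [InnerProductSpace.toDual_apply_apply] at h
  exact h

lemma ConvexOn.inner_gradient_le {f : E → ℝ} {g x : E} (hf : ConvexOn ℝ univ f)
    (hg : HasGradientAt f g x) (y : E) : ⟪g, y - x⟫ ≤ f y - f x := by
  have hφ : ConvexOn ℝ univ (fun s : ℝ => f (lineMap x y s)) := by
    have h := hf.comp_affineMap (lineMap x y : ℝ →ᵃ[ℝ] E)
    rw [preimage_univ] at h
    exact h
  have hφ' := hφ.le_slope_of_hasDerivAt (mem_univ 0) (mem_univ 1) one_pos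
    (HasGradientAt.hasDerivAt_comp_lineMap (by simpa using hg))
  simpa [slope_def_field] using hφ'

lemma inner_hessian_eq_zero_of_eqOn_lineMap {f : E → ℝ} {g : E → E} {H : E →L[ℝ] E} {x y : E}
    (hf : ∀ z, HasGradientAt f (g z) z) (hg : HasFDerivAt g H x)
    (haff : EqOn (fun t : ℝ => f (lineMap x y t)) (lineMap (f x) (f y)) (Icc 0 1)) :
    ⟪H (y - x), y - x⟫ = 0 := by
  refine eq_zero_of_hasDerivAt_of_eqOn_lineMap (ψ := fun t => ⟪g (lineMap x y t), y - x⟫)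
    (fun t _ => (hf _).hasDerivAt_comp_lineMap) ?_ haff
  have hg' : HasFDerivAt g H (lineMap x y (0 : ℝ)) := by simpa using hg
  simpa using (hg'.comp_hasDerivAt 0 hasDerivAt_lineMap).inner ℝ (hasDerivAt_const 0 (y - x))

end Gradient

section L1

variable {ι : Type*} [Fintype ι]

lemma convexOn_sum_abs : ConvexOn ℝ univ (fun θ : EuclideanSpace ℝ ι => ∑ j, |θ j|) := by
  refine ⟨convex_univ, fun x _ y _ a b ha hb _ => ?_⟩
  simp only [PiLp.add_apply, PiLp.smul_apply, smul_eq_mul, Finset.mul_sum,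
    ← Finset.sum_add_distrib]
  gcongr with j
  calc |a * x j + b * y j| ≤ |a * x j| + |b * y j| := abs_add_le _ _
    _ = a * |x j| + b * |y j| := by rw [abs_mul, abs_mul, abs_of_nonneg ha, abs_of_nonneg hb]

lemma EuclideanSpace.inner_eq_sum_mul_s4 (z θ : EuclideanSpace ℝ ι) : ⟪z, θ⟫ = ∑ j, z j * θ j := by
  simp [PiLp.inner_apply, mul_comm]

lemma inner_eq_sum_abs_of_eq_sign {z θ : EuclideanSpace ℝ ι}
    (hsign : ∀ j, θ j ≠ 0 → z j = Real.sign (θ j)) : ⟪z, θ⟫ = ∑ j, |θ j| := by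
  rw [EuclideanSpace.inner_eq_sum_mul_s4]
  refine Finset.sum_congr rfl fun j _ => ?_
  by_cases h : θ j = 0
  · simp [h]
  · rw [hsign j h, Real.sign_mul_self_eq_abs]

lemma mul_eq_abs_of_stationary_of_le {ℓ : EuclideanSpace ℝ ι → ℝ} {g z θhat θ : EuclideanSpace ℝ ι}
    {lam : ℝ} (hℓ : ConvexOn ℝ univ ℓ) (hg : HasGradientAt ℓ g θhat) (hstat : g + lam • z = 0)
    (hlam : 0 < lam) (hsign : ∀ j, θhat j ≠ 0 → z j = Real.sign (θhat j))
    (hbound : ∀ j, |z j| ≤ 1)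
    (hθ : ℓ θ + lam * ∑ j, |θ j| ≤ ℓ θhat + lam * ∑ j, |θhat j|) (j : ι) :
    z j * θ j = |θ j| := by
  have hterm : ∀ j ∈ Finset.univ, z j * θ j ≤ |θ j| := fun j _ =>
    (le_abs_self _).trans (by rw [abs_mul]; exact mul_le_of_le_one_left (abs_nonneg _) (hbound j))
  have hgrad := hℓ.inner_gradient_le hg θ
  rw [eq_neg_of_add_eq_zero_left hstat, inner_neg_left, real_inner_smul_left, inner_sub_right,
    inner_eq_sum_abs_of_eq_sign hsign, EuclideanSpace.inner_eq_sum_mul_s4] at hgrad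
  have hsum : ∑ j, |θ j| ≤ ∑ j, z j * θ j := le_of_mul_le_mul_left (by linarith) hlam
  exact (Finset.sum_eq_sum_iff_of_le hterm).1 (le_antisymm (Finset.sum_le_sum hterm) hsum) j
    (Finset.mem_univ j)

end L1

theorem l1_reg_unique_solution_general
    (m : ℕ) (S : Set (Fin m))
    (ℓ : EuclideanSpace ℝ (Fin m) → ℝ)
    (g : EuclideanSpace ℝ (Fin m) → EuclideanSpace ℝ (Fin m))
    (H : EuclideanSpace ℝ (Fin m) →
          EuclideanSpace ℝ (Fin m) →L[ℝ] EuclideanSpace ℝ (Fin m))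
    (hconv : ConvexOn ℝ Set.univ ℓ)
    (hgrad : ∀ θ, HasGradientAt ℓ (g θ) θ)
    (hhess : ∀ θ, HasFDerivAt g (H θ) θ)
    (lam : ℝ) (hlam : 0 < lam)
    (F : EuclideanSpace ℝ (Fin m) → ℝ)
    (hF : ∀ θ, F θ = ℓ θ + lam * ∑ j, |θ j|)
    (θhat zhat : EuclideanSpace ℝ (Fin m))
    (hstat : g θhat + lam • zhat = 0)
    (hsign : ∀ j, θhat j ≠ 0 → zhat j = Real.sign (θhat j))
    (hbound : ∀ j, |zhat j| ≤ 1)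
    (hstrict : ∀ j ∉ S, |zhat j| < 1)
    (hposdef : ∀ v : EuclideanSpace ℝ (Fin m),
        (∀ j ∉ S, v j = 0) → v ≠ 0 → 0 < (inner ℝ v (H θhat v) : ℝ))
    (hopt : ∀ θ, F θhat ≤ F θ) :
    ∀ θtilde : EuclideanSpace ℝ (Fin m), (∀ θ, F θtilde ≤ F θ) → θtilde = θhat := by
  intro θt hoptt
  have hF' : F = ℓ + fun θ => lam * ∑ j, |θ j| := funext hF
  have hsupp : ∀ θ, F θ ≤ F θhat → ∀ j ∉ S, θ j = 0 := fun θ hθ j hj =>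
    eq_zero_of_mul_eq_abs_of_abs_lt_one (hstrict j hj) <|
      mul_eq_abs_of_stationary_of_le hconv (hgrad θhat) hstat hlam hsign hbound
        (by rwa [← hF, ← hF]) j
  have hseg : EqOn (fun t : ℝ => ℓ (lineMap θhat θt t)) (lineMap (ℓ θhat) (ℓ θt)) (Icc 0 1) :=
    fun t ht => hconv.apply_lineMap_eq_of_isMinOn_add (convexOn_sum_abs.smul hlam.le)
      (hF' ▸ fun θ _ => hopt θ) (hF' ▸ hoptt θhat) ht
  by_contra hne
  refine (hposdef (θt - θhat) (fun j hj => ?_) (sub_ne_zero.2 hne)).ne' ?_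
  · simp [hsupp θt (hoptt θhat) j hj, hsupp θhat le_rfl j hj]
  · rw [real_inner_comm]
    exact inner_hessian_eq_zero_of_eqOn_lineMap hgrad (hhess θhat) hseg

/-- Uniqueness of the optimal solution of the ℓ1-regularized convex problem.
If there is an optimal solution `θ̂` with subgradient `ẑ` satisfying strict dual
feasibility `|ẑ_j| < 1` on `Sᶜ`, and the Hessian of `ℓ` at `θ̂` is strictly positive
definite on the coordinates in `S`, then `θ̂` is the unique optimal solution. -/
theorem l1_reg_unique_solution
    (m : ℕ) (S : Set (Fin m))
    (ℓ : EuclideanSpace ℝ (Fin m) → ℝ)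
    (g : EuclideanSpace ℝ (Fin m) → EuclideanSpace ℝ (Fin m))
    (H : EuclideanSpace ℝ (Fin m) →
          EuclideanSpace ℝ (Fin m) →L[ℝ] EuclideanSpace ℝ (Fin m))
    (hconv : ConvexOn ℝ Set.univ ℓ)
    (hgrad : ∀ θ, HasGradientAt ℓ (g θ) θ)
    (hhess : ∀ θ, HasFDerivAt g (H θ) θ)
    (hcont : Continuous fun θ => H θ)
    (lam : ℝ) (hlam : 0 < lam)
    (F : EuclideanSpace ℝ (Fin m) → ℝ)
    (hF : ∀ θ, F θ = ℓ θ + lam * ∑ j, |θ j|)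
    (θhat zhat : EuclideanSpace ℝ (Fin m))
    (hstat : g θhat + lam • zhat = 0)
    (hsign : ∀ j, θhat j ≠ 0 → zhat j = Real.sign (θhat j))
    (hbound : ∀ j, |zhat j| ≤ 1)
    (hstrict : ∀ j ∉ S, |zhat j| < 1)
    (hposdef : ∀ v : EuclideanSpace ℝ (Fin m),
        (∀ j ∉ S, v j = 0) → v ≠ 0 → 0 < (inner ℝ v (H θhat v) : ℝ))
    (hopt : ∀ θ, F θhat ≤ F θ) :
    ∀ θtilde : EuclideanSpace ℝ (Fin m), (∀ θ, F θtilde ≤ F θ) → θtilde = θhat :=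
  l1_reg_unique_solution_general m S ℓ g H hconv hgrad hhess lam hlam F hF θhat zhat hstat hsign
    hbound hstrict hposdef hopt
end

section
/- Suppose ẑ_{S^c} satisfies λ ẑ_{S^c} = [W_{S^c} − R_{S^c}] − Q^n_{S^cS}(Q^n_{SS})^{-1}[W_S − R_S] + λ Q^n_{S^cS}(Q^n_{SS})^{-1} ẑ_S, where |||Q^n_{S^cS}(Q^n_{SS})^{-1}|||_∞ ≤ 1−α, ||ẑ_S||_∞ ≤ 1, ||W||_∞/λ ≤ α/(4(2−α)), and ||R||_∞/λ ≤ α/(4(2−α)). Then ||ẑ_{S^c}||_∞ ≤ 1 − α/2 < 1. -/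
open Matrix

/-- The ℓ∞ matrix operator norm (maximum absolute row sum). -/
noncomputable def linfMatNorm {m n : ℕ} (A : Matrix (Fin m) (Fin n) ℝ) : ℝ :=
  ⨆ j, ∑ k, |A j k|

/-! Dividing the stationarity equation by `λ` and applying the triangle inequality gives
`‖ẑ_{Sᶜ}‖_∞ ≤ |||M|||_∞ + (1 + |||M|||_∞) (‖W‖_∞/λ + ‖R‖_∞/λ)`, where `M = Qⁿ_{SᶜS}(Qⁿ_{SS})⁻¹`.
With `|||M|||_∞ ≤ 1 - α` and both ratios at most `α/(4(2-α))` the right-hand side is exactly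
`1 - α/2`. -/

theorem sum_abs_le_linfMatNorm {m n : ℕ} (A : Matrix (Fin m) (Fin n) ℝ) (j : Fin m) :
    ∑ k, |A j k| ≤ linfMatNorm A :=
  le_ciSup (f := fun j => ∑ k, |A j k|) (Set.finite_range _).bddAbove j

theorem abs_mulVec_apply_le {m n : ℕ} (A : Matrix (Fin m) (Fin n) ℝ) {v : Fin n → ℝ} {B : ℝ}
    (hB : 0 ≤ B) (hv : ∀ k, |v k| ≤ B) (j : Fin m) :
    |(A *ᵥ v) j| ≤ linfMatNorm A * B :=
  calc |(A *ᵥ v) j| ≤ ∑ k, |A j k| * |v k| := by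
        simpa only [mulVec, dotProduct, abs_mul] using
          Finset.abs_sum_le_sum_abs (fun k => A j k * v k) Finset.univ
    _ ≤ ∑ k, |A j k| * B :=
        Finset.sum_le_sum fun k _ => mul_le_mul_of_nonneg_left (hv k) (abs_nonneg _)
    _ = (∑ k, |A j k|) * B := Finset.sum_mul .. |>.symm
    _ ≤ linfMatNorm A * B := mul_le_mul_of_nonneg_right (sum_abs_le_linfMatNorm A j) hB

theorem abs_le_of_smul_eq_sub_mulVec_add {m d : ℕ} (M : Matrix (Fin m) (Fin d) ℝ)
    {lam a ω ρ : ℝ} (hlam : 0 < lam) (hM : linfMatNorm M ≤ a)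
    {WS RS zS : Fin d → ℝ} {WC RC zC : Fin m → ℝ} (hzS : ∀ k, |zS k| ≤ 1)
    (hW : ∀ k, |WS k| / lam ≤ ω) (hWc : ∀ j, |WC j| / lam ≤ ω)
    (hR : ∀ k, |RS k| / lam ≤ ρ) (hRc : ∀ j, |RC j| / lam ≤ ρ)
    (heq : lam • zC = (WC - RC) - M *ᵥ (WS - RS) + lam • M *ᵥ zS) (j : Fin m) :
    |zC j| ≤ a + (1 + a) * (ω + ρ) := by
  have hdiff : ∀ {w r : ℝ}, |w| / lam ≤ ω → |r| / lam ≤ ρ → |(w - r) / lam| ≤ ω + ρ :=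
    fun {w r} hw hr => by
      rw [abs_div, abs_of_pos hlam]
      calc |w - r| / lam ≤ (|w| + |r|) / lam := by gcongr; exact abs_sub w r
        _ = |w| / lam + |r| / lam := add_div ..
        _ ≤ ω + ρ := add_le_add hw hr
  have hωρ : 0 ≤ ω + ρ := (abs_nonneg _).trans (hdiff (hWc j) (hRc j))
  have hzC : zC j = (WC j - RC j) / lam - (M *ᵥ (lam⁻¹ • (WS - RS))) j + (M *ᵥ zS) j := by
    have := congrFun heq j
    simp only [Pi.smul_apply, Pi.add_apply, Pi.sub_apply, smul_eq_mul, mulVec_smul] at this ⊢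
    field_simp
    linarith
  have hnoise := abs_mulVec_apply_le M hωρ (v := lam⁻¹ • (WS - RS))
    (fun k => by simpa only [Pi.smul_apply, Pi.sub_apply, smul_eq_mul, inv_mul_eq_div]
      using hdiff (hW k) (hR k)) j
  have hsubgrad := abs_mulVec_apply_le M zero_le_one hzS j
  have hMa : linfMatNorm M * (ω + ρ) ≤ a * (ω + ρ) := mul_le_mul_of_nonneg_right hM hωρ
  rw [hzC]
  calc _ ≤ |(WC j - RC j) / lam| + |(M *ᵥ (lam⁻¹ • (WS - RS))) j| + |(M *ᵥ zS) j| :=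
        (abs_add_le _ _).trans (by gcongr; exact abs_sub _ _)
    _ ≤ a + (1 + a) * (ω + ρ) := by linarith [hdiff (hWc j) (hRc j)]

theorem strict_dual_feasibility_general
    (d m : ℕ) (α lam : ℝ) (hα : α ∈ Set.Ioc (0 : ℝ) 1) (hlam : 0 < lam)
    (QnSS : Matrix (Fin d) (Fin d) ℝ)
    (QnCS : Matrix (Fin m) (Fin d) ℝ)
    (hM : linfMatNorm (QnCS * QnSS⁻¹) ≤ 1 - α)
    (WS RS zS : Fin d → ℝ) (WC RC zC : Fin m → ℝ)
    (hzS : ∀ k, |zS k| ≤ 1)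
    (hW : ∀ k, |WS k| / lam ≤ α / (4 * (2 - α)))
    (hWc : ∀ j, |WC j| / lam ≤ α / (4 * (2 - α)))
    (hR : ∀ k, |RS k| / lam ≤ α / (4 * (2 - α)))
    (hRc : ∀ j, |RC j| / lam ≤ α / (4 * (2 - α)))
    (heq : lam • zC =
      (WC - RC) - (QnCS * QnSS⁻¹).mulVec (WS - RS)
        + lam • (QnCS * QnSS⁻¹).mulVec zS) :
    (∀ j, |zC j| ≤ 1 - α / 2) ∧ 1 - α / 2 < 1 := by
  obtain ⟨hα0, hα1⟩ := hα
  have hbound : 1 - α + (1 + (1 - α)) * (α / (4 * (2 - α)) + α / (4 * (2 - α))) = 1 - α / 2 := by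
    have : 2 - α ≠ 0 := by linarith
    field_simp
    ring
  refine ⟨fun j => ?_, by linarith⟩
  rw [← hbound]
  exact abs_le_of_smul_eq_sub_mulVec_add _ hlam hM hzS hW hWc hR hRc heq j

/-- Strict dual feasibility: if `λẑ_{Sᶜ} = [W_{Sᶜ} − R_{Sᶜ}] − M[W_S − R_S] + λ M ẑ_S`
with `M = Qⁿ_{SᶜS}(Qⁿ_{SS})⁻¹`, `|||M|||_∞ ≤ 1−α`, `‖ẑ_S‖_∞ ≤ 1`,
`‖W‖_∞/λ ≤ α/(4(2−α))` and `‖R‖_∞/λ ≤ α/(4(2−α))`, then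
`‖ẑ_{Sᶜ}‖_∞ ≤ 1 − α/2 < 1`. -/
theorem strict_dual_feasibility
    (d m : ℕ) (α lam : ℝ) (hα : α ∈ Set.Ioc (0 : ℝ) 1) (hlam : 0 < lam)
    (QnSS : Matrix (Fin d) (Fin d) ℝ) (hQnInv : IsUnit QnSS.det)
    (QnCS : Matrix (Fin m) (Fin d) ℝ)
    (hM : linfMatNorm (QnCS * QnSS⁻¹) ≤ 1 - α)
    (WS RS zS : Fin d → ℝ) (WC RC zC : Fin m → ℝ)
    (hzS : ∀ k, |zS k| ≤ 1)
    (hW : ∀ k, |WS k| / lam ≤ α / (4 * (2 - α)))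
    (hWc : ∀ j, |WC j| / lam ≤ α / (4 * (2 - α)))
    (hR : ∀ k, |RS k| / lam ≤ α / (4 * (2 - α)))
    (hRc : ∀ j, |RC j| / lam ≤ α / (4 * (2 - α)))
    (heq : lam • zC =
      (WC - RC) - (QnCS * QnSS⁻¹).mulVec (WS - RS)
        + lam • (QnCS * QnSS⁻¹).mulVec zS) :
    (∀ j, |zC j| ≤ 1 - α / 2) ∧ 1 - α / 2 < 1 :=
  strict_dual_feasibility_general d m α lam hα hlam QnSS QnCS hM WS RS zS WC RC zC hzS hW hWc hR hRc
    heq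
end

section
/- Let G(u) = W^T u + u^T H u + λ(||θ* + u||_1 − ||θ*||_1) for u ∈ R^d, where ||W||_∞ ≤ λ/4, λ_min(H) ≥ C_min/2 with C_min > 0, and ||·||_1 is the ℓ1 norm. Then for any u with ||u||_2 = Mλ√d where M = 5/C_min, G(u) ≥ (λ√d)²(−M/4 + (C_min/2)M² − M) > 0. -/
/-!
On the sphere `‖u‖₂ = r` we have `‖u‖₁ ≤ √d r`. Hence the linear term `Wᵀu` and, by the reverse
triangle inequality, the ℓ¹ increment each cost at most a multiple of `λ√d r`, while the quadratic
term gains `(C_min/2) r²`. For `r = Mλ√d` with `M = 5/C_min` the total is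
`(λ√d)² (25/(2C_min) − 25/(4C_min)) > 0`.
-/

open Matrix Finset

section

variable {ι : Type*} [Fintype ι]

theorem sum_abs_le_sqrt_card_mul_sqrt_sum_sq (u : ι → ℝ) :
    ∑ j, |u j| ≤ √(Fintype.card ι) * √(∑ j, u j ^ 2) := by
  rw [← Real.sqrt_mul (Nat.cast_nonneg _)]
  refine Real.le_sqrt_of_sq_le ?_
  simpa only [sq_abs, card_univ] using sq_sum_le_card_mul_sum_sq (s := univ) (f := fun j => |u j|)

theorem abs_sum_mul_le_of_abs_le {c : ℝ} {W : ι → ℝ} (hW : ∀ j, |W j| ≤ c) (u : ι → ℝ) :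
    |∑ j, W j * u j| ≤ c * ∑ j, |u j| := by
  rw [mul_sum]
  refine (abs_sum_le_sum_abs _ _).trans (sum_le_sum fun j _ => ?_)
  rw [abs_mul]
  exact mul_le_mul_of_nonneg_right (hW j) (abs_nonneg _)

theorem neg_sum_abs_le_sum_abs_add_sub_sum_abs (θ u : ι → ℝ) :
    -∑ j, |u j| ≤ ∑ j, |θ j + u j| - ∑ j, |θ j| := by
  rw [neg_le_sub_iff_le_add, ← sub_le_iff_le_add, ← sum_sub_distrib]
  exact sum_le_sum fun j _ => abs_sub_abs_le_abs_add (θ j) (u j)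

theorem linear_add_quadratic_add_l1_increment_ge {a c lam : ℝ} (hlam : 0 ≤ lam) {W : ι → ℝ}
    (hW : ∀ j, |W j| ≤ a) {H : Matrix ι ι ℝ} (hH : ∀ v : ι → ℝ, c * ∑ i, v i ^ 2 ≤ v ⬝ᵥ H *ᵥ v)
    (θ u : ι → ℝ) :
    c * ∑ j, u j ^ 2 - (a + lam) * ∑ j, |u j| ≤
      (∑ j, W j * u j) + u ⬝ᵥ H *ᵥ u + lam * ((∑ j, |θ j + u j|) - ∑ j, |θ j|) := by
  have hlin := neg_le_of_abs_le (abs_sum_mul_le_of_abs_le hW u)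
  have hpen := mul_le_mul_of_nonneg_left (neg_sum_abs_le_sum_abs_add_sub_sum_abs θ u) hlam
  linarith [hH u]

end

theorem G_positive_on_sphere_general
    (d : ℕ) (hd : 1 ≤ d) (Cmin lam : ℝ) (hC : 0 < Cmin) (hlam : 0 < lam)
    (W θstar : Fin d → ℝ)
    (hW : ∀ j, |W j| ≤ lam / 4)
    (H : Matrix (Fin d) (Fin d) ℝ)
    (hHmin : ∀ v : Fin d → ℝ, Cmin / 2 * (∑ i, v i ^ 2) ≤ v ⬝ᵥ H.mulVec v)
    (G : (Fin d → ℝ) → ℝ)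
    (hG : ∀ u, G u = (∑ j, W j * u j) + u ⬝ᵥ H.mulVec u
        + lam * ((∑ j, |θstar j + u j|) - ∑ j, |θstar j|))
    (M : ℝ) (hM : M = 5 / Cmin)
    (u : Fin d → ℝ)
    (hu : Real.sqrt (∑ j, u j ^ 2) = M * lam * Real.sqrt d) :
    G u ≥ (lam * Real.sqrt d) ^ 2 * (-(M / 4) + Cmin / 2 * M ^ 2 - M) ∧
    0 < (lam * Real.sqrt d) ^ 2 * (-(M / 4) + Cmin / 2 * M ^ 2 - M) := by
  have hl2 : ∑ j, u j ^ 2 = (M * lam * √d) ^ 2 := by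
    rw [← hu, Real.sq_sqrt (by positivity)]
  have hl1 : ∑ j, |u j| ≤ √d * (M * lam * √d) := by
    simpa [hu] using sum_abs_le_sqrt_card_mul_sqrt_sum_sq u
  refine ⟨?_, ?_⟩
  · calc (lam * √d) ^ 2 * (-(M / 4) + Cmin / 2 * M ^ 2 - M)
        = Cmin / 2 * (M * lam * √d) ^ 2 - (lam / 4 + lam) * (√d * (M * lam * √d)) := by ring
      _ ≤ Cmin / 2 * ∑ j, u j ^ 2 - (lam / 4 + lam) * ∑ j, |u j| := by rw [hl2]; gcongr
      _ ≤ G u := hG u ▸ linear_add_quadratic_add_l1_increment_ge hlam.le hW hHmin θstar u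
  · have hcoef : -(M / 4) + Cmin / 2 * M ^ 2 - M = 25 / (4 * Cmin) := by
      rw [hM]; field_simp; ring
    have : 0 < √d := Real.sqrt_pos.mpr (by exact_mod_cast hd)
    rw [hcoef]
    positivity

/-- Strict positivity of `G(u) = Wᵀu + uᵀHu + λ(‖θ*+u‖₁ − ‖θ*‖₁)` on the sphere of
radius `Mλ√d` with `M = 5/C_min`: `G(u) ≥ (λ√d)²(−M/4 + (C_min/2)M² − M) > 0`,
assuming `‖W‖_∞ ≤ λ/4` and `λ_min(H) ≥ C_min/2`. -/
theorem G_positive_on_sphere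
    (d : ℕ) (hd : 1 ≤ d) (Cmin lam : ℝ) (hC : 0 < Cmin) (hlam : 0 < lam)
    (W θstar : Fin d → ℝ)
    (hW : ∀ j, |W j| ≤ lam / 4)
    (H : Matrix (Fin d) (Fin d) ℝ) (hH : H.IsSymm)
    (hHmin : ∀ v : Fin d → ℝ, Cmin / 2 * (∑ i, v i ^ 2) ≤ v ⬝ᵥ H.mulVec v)
    (G : (Fin d → ℝ) → ℝ)
    (hG : ∀ u, G u = (∑ j, W j * u j) + u ⬝ᵥ H.mulVec u
        + lam * ((∑ j, |θstar j + u j|) - ∑ j, |θstar j|))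
    (M : ℝ) (hM : M = 5 / Cmin)
    (u : Fin d → ℝ)
    (hu : Real.sqrt (∑ j, u j ^ 2) = M * lam * Real.sqrt d) :
    G u ≥ (lam * Real.sqrt d) ^ 2 * (-(M / 4) + Cmin / 2 * M ^ 2 - M) ∧
    0 < (lam * Real.sqrt d) ^ 2 * (-(M / 4) + Cmin / 2 * M ^ 2 - M) :=
  G_positive_on_sphere_general d hd Cmin lam hC hlam W θstar hW H hHmin G hG M hM u hu
end
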